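/- arXiv:1007.1111 — 2 statements merged into one kernel-verified Lean document; each statement's English description precedes it below -/
import Mathlib

section
/- Let n ≥ 2 be a natural number, let a : I → ℝ be a continuous function on an open interval I, and let x₀ ∈ I. Then there exist an open subinterval J ⊆ I containing x₀ and a three-times continuously differentiable function φ : J → ℝ with φ'(x) > 0 for all x ∈ J, such that (n(n²-1)/12)·(φ'(x)·φ'''(x) - (3/2)·φ''(x)²)/φ'(x)² = a(x) for all x ∈ J. -/
/-!
If `u'' + q u = 0` and `u ≠ 0`, then `φ = ∫ u⁻²` has `φ' = u⁻²`, `φ'' = -2u'u⁻³` and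
`φ''' = (6u'² + 2qu²)u⁻⁴`, so `(φ'φ''' - (3/2)φ''²)/φ'² = 2q`. Since `c = n(n²-1)/12 > 0`,
it suffices to solve `u'' + (a/2c) u = 0` near `x₀` with `u(x₀) = 1`, by Picard–Lindelöf for the
corresponding first-order linear system, and to restrict to a ball around `x₀` on which `u` does
not vanish.
-/

open Set Filter Topology Metric

theorem exists_hasDerivAt_linear_ode {E : Type*} [NormedAddCommGroup E] [NormedSpace ℝ E]
    [CompleteSpace E] {A : ℝ → E →L[ℝ] E} {s : Set ℝ} {t₀ : ℝ} (hs : s ∈ 𝓝 t₀)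
    (hA : ContinuousOn A s) (x₀ : E) :
    ∃ γ : ℝ → E, γ t₀ = x₀ ∧ ∀ᶠ t in 𝓝 t₀, HasDerivAt γ (A t (γ t)) t := by
  obtain ⟨δ, hδ, hδs⟩ := nhds_basis_closedBall.mem_iff.1 hs
  obtain ⟨C, hC⟩ := (isCompact_closedBall t₀ δ).exists_bound_of_continuousOn (hA.mono hδs)
  set K : NNReal := C.toNNReal
  set L : NNReal := K * (‖x₀‖₊ + 1)
  set ε : ℝ := min δ (1 / (L + 1))
  have hε : 0 < ε := lt_min hδ (by positivity)
  have hεδ : ε ≤ δ := min_le_left _ _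
  have hIcc : Icc (t₀ - ε) (t₀ + ε) ⊆ closedBall t₀ δ := by
    rw [Real.closedBall_eq_Icc]
    exact Icc_subset_Icc (by linarith) (by linarith)
  have hK : ∀ t ∈ Icc (t₀ - ε) (t₀ + ε), ‖A t‖₊ ≤ K := fun t ht => by
    rw [← NNReal.coe_le_coe, coe_nnnorm, Real.coe_toNNReal']
    exact (hC t (hIcc ht)).trans (le_max_left _ _)
  have hpl : IsPicardLindelof (fun t x => A t x) (tmin := t₀ - ε) (tmax := t₀ + ε)
      ⟨t₀, by constructor <;> linarith⟩ x₀ 1 0 L K :=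
    { lipschitzOnWith := fun t ht => ((A t).lipschitz.weaken (hK t ht)).lipschitzOnWith
      continuousOn := fun _ _ => (hA.mono (hIcc.trans hδs)).clm_apply continuousOn_const
      norm_le := fun t ht x hx => by
        calc ‖A t x‖ ≤ ‖A t‖ * ‖x‖ := (A t).le_opNorm x
          _ ≤ K * (‖x₀‖ + 1) := by
            gcongr
            · exact_mod_cast hK t ht
            · simpa using norm_le_of_mem_closedBall hx
      mul_max_le := by
        simp only [add_sub_cancel_left, sub_sub_cancel, max_self, NNReal.coe_one,
          NNReal.coe_zero, sub_zero]
        calc (L : ℝ) * ε ≤ L * (1 / (L + 1)) := by gcongr; exact min_le_right _ _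
          _ ≤ 1 := by rw [mul_one_div, div_le_one (by positivity)]; linarith }
  obtain ⟨γ, hγ₀, hγ⟩ := hpl.exists_eq_forall_mem_Icc_hasDerivWithinAt₀
  refine ⟨γ, hγ₀, ?_⟩
  filter_upwards [Ioo_mem_nhds (by linarith : t₀ - ε < t₀) (by linarith : t₀ < t₀ + ε)] with t ht
  exact (hγ t (Ioo_subset_Icc_self ht)).hasDerivAt (Icc_mem_nhds ht.1 ht.2)

theorem exists_hasDerivAt_hill {q : ℝ → ℝ} {s : Set ℝ} {t₀ : ℝ} (hs : s ∈ 𝓝 t₀)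
    (hq : ContinuousOn q s) :
    ∃ u p : ℝ → ℝ, u t₀ = 1 ∧
      ∀ᶠ t in 𝓝 t₀, HasDerivAt u (p t) t ∧ HasDerivAt p (-(q t * u t)) t := by
  let A : ℝ → ℝ × ℝ →L[ℝ] ℝ × ℝ := fun t =>
    .inl ℝ ℝ ℝ ∘L .snd ℝ ℝ ℝ - q t • (.inr ℝ ℝ ℝ ∘L .fst ℝ ℝ ℝ)
  have hA : ContinuousOn A s := continuousOn_const.sub (hq.smul continuousOn_const)
  obtain ⟨γ, hγ₀, hγ⟩ := exists_hasDerivAt_linear_ode hs hA (1, 0)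
  refine ⟨fun t => (γ t).1, fun t => (γ t).2, by simp [hγ₀], ?_⟩
  filter_upwards [hγ] with t ht
  constructor
  · simpa [A] using ht.hasFDerivAt.fst.hasDerivAt
  · simpa [A] using ht.hasFDerivAt.snd.hasDerivAt

section OpenSet

variable {J : Set ℝ} {f f' : ℝ → ℝ}

theorem hasDerivAt_integral_of_continuousOn (hJ : IsOpen J) (hJc : Convex ℝ J) {a x : ℝ}
    (ha : a ∈ J) (hx : x ∈ J) (hf : ContinuousOn f J) :
    HasDerivAt (fun y => ∫ t in a..y, f t) (f x) x :=
  intervalIntegral.integral_hasDerivAt_right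
    ((hf.mono (hJc.ordConnected.uIcc_subset ha hx)).intervalIntegrable)
    (hf.stronglyMeasurableAtFilter hJ x hx) (hf.continuousAt (hJ.mem_nhds hx))

theorem contDiffOn_succ_of_hasDerivAt (hJ : IsOpen J) {n : ℕ}
    (hf : ∀ x ∈ J, HasDerivAt f (f' x) x) (hf' : ContDiffOn ℝ n f' J) :
    ContDiffOn ℝ (n + 1) f J := by
  rw [contDiffOn_succ_iff_deriv_of_isOpen hJ]
  exact ⟨fun x hx => (hf x hx).differentiableAt.differentiableWithinAt, by simp,
    hf'.congr fun x hx => (hf x hx).deriv⟩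

theorem iteratedDeriv_succ_eq_of_hasDerivAt (hJ : IsOpen J)
    (hf : ∀ x ∈ J, HasDerivAt f (f' x) x) (k : ℕ) {x : ℝ} (hx : x ∈ J) :
    iteratedDeriv (k + 1) f x = iteratedDeriv k f' x := by
  rw [iteratedDeriv_succ']
  exact Filter.EventuallyEq.iteratedDeriv_eq k
    (eventually_of_mem (hJ.mem_nhds hx) fun y hy => (hf y hy).deriv)

end OpenSet

section Hill

variable {J : Set ℝ} {u p q : ℝ → ℝ}

theorem contDiffOn_two_of_hill (hJ : IsOpen J)
    (hu : ∀ x ∈ J, HasDerivAt u (p x) x) (hp : ∀ x ∈ J, HasDerivAt p (-(q x * u x)) x)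
    (hq : ContinuousOn q J) : ContDiffOn ℝ 2 u J := by
  have huc : ContinuousOn u J := fun x hx => (hu x hx).continuousAt.continuousWithinAt
  have hp1 : ContDiffOn ℝ (1 : ℕ) p J :=
    contDiffOn_succ_of_hasDerivAt (n := 0) hJ hp (contDiffOn_zero.2 (hq.mul huc).neg)
  exact contDiffOn_succ_of_hasDerivAt (n := 1) hJ hu hp1

theorem hasDerivAt_inv_sq {x : ℝ} (hu : HasDerivAt u (p x) x) (hux : u x ≠ 0) :
    HasDerivAt (fun y => (u y ^ 2)⁻¹) (-2 * p x / u x ^ 3) x := by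
  refine ((hu.fun_pow 2).fun_inv (pow_ne_zero 2 hux)).congr_deriv ?_
  field_simp
  ring

theorem hasDerivAt_deriv_inv_sq {x : ℝ} (hu : HasDerivAt u (p x) x)
    (hp : HasDerivAt p (-(q x * u x)) x) (hux : u x ≠ 0) :
    HasDerivAt (fun y => -2 * p y / u y ^ 3) ((6 * p x ^ 2 + 2 * q x * u x ^ 2) / u x ^ 4) x := by
  refine ((hp.const_mul (-2)).fun_div (hu.fun_pow 3) (pow_ne_zero 3 hux)).congr_deriv ?_
  field_simp
  ring

theorem exists_schwarzian_eq_of_hill (hJ : IsOpen J) (hJc : Convex ℝ J) {x₀ : ℝ}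
    (hx₀ : x₀ ∈ J) (hu : ∀ x ∈ J, HasDerivAt u (p x) x)
    (hp : ∀ x ∈ J, HasDerivAt p (-(q x * u x)) x) (hq : ContinuousOn q J)
    (hu₀ : ∀ x ∈ J, u x ≠ 0) :
    ∃ φ : ℝ → ℝ, ContDiffOn ℝ 3 φ J ∧ (∀ x ∈ J, 0 < deriv φ x) ∧
      ∀ x ∈ J, (deriv φ x * iteratedDeriv 3 φ x - (3 / 2) * (iteratedDeriv 2 φ x) ^ 2)
        / (deriv φ x) ^ 2 = 2 * q x := by
  set g : ℝ → ℝ := fun y => (u y ^ 2)⁻¹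
  have hg : ContDiffOn ℝ (2 : ℕ) g J :=
    ((contDiffOn_two_of_hill hJ hu hp hq).pow 2).inv fun x hx => pow_ne_zero 2 (hu₀ x hx)
  have hφ : ∀ x ∈ J, HasDerivAt (fun y => ∫ t in x₀..y, g t) (g x) x := fun x hx =>
    hasDerivAt_integral_of_continuousOn hJ hJc hx₀ hx hg.continuousOn
  have hg' : ∀ x ∈ J, HasDerivAt g (-2 * p x / u x ^ 3) x := fun x hx =>
    hasDerivAt_inv_sq (hu x hx) (hu₀ x hx)
  have hg'' : ∀ x ∈ J, HasDerivAt (fun y => -2 * p y / u y ^ 3)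
      ((6 * p x ^ 2 + 2 * q x * u x ^ 2) / u x ^ 4) x := fun x hx =>
    hasDerivAt_deriv_inv_sq (hu x hx) (hp x hx) (hu₀ x hx)
  refine ⟨fun y => ∫ t in x₀..y, g t, contDiffOn_succ_of_hasDerivAt hJ hφ hg,
    fun x hx => ?_, fun x hx => ?_⟩
  · rw [(hφ x hx).deriv]
    have := hu₀ x hx
    positivity
  · rw [(hφ x hx).deriv, iteratedDeriv_succ_eq_of_hasDerivAt hJ hφ 2 hx,
      iteratedDeriv_succ_eq_of_hasDerivAt hJ hφ 1 hx,
      iteratedDeriv_succ_eq_of_hasDerivAt hJ hg' 1 hx, iteratedDeriv_one, iteratedDeriv_one,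
      (hg' x hx).deriv, (hg'' x hx).deriv]
    have := hu₀ x hx
    simp only [g]
    field_simp
    ring

end Hill

theorem stmt_9_general (n : ℕ) (hn : 2 ≤ n) (I : Set ℝ) (hI : IsOpen I)
    (a : ℝ → ℝ) (ha : ContinuousOn a I) (x₀ : ℝ) (hx₀ : x₀ ∈ I) :
    ∃ J : Set ℝ, J ⊆ I ∧ IsOpen J ∧ Convex ℝ J ∧ x₀ ∈ J ∧
      ∃ φ : ℝ → ℝ, ContDiffOn ℝ 3 φ J ∧
        (∀ x ∈ J, 0 < deriv φ x) ∧
        (∀ x ∈ J, ((n : ℝ) * ((n : ℝ) ^ 2 - 1) / 12) *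
          (deriv φ x * iteratedDeriv 3 φ x - (3 / 2) * (iteratedDeriv 2 φ x) ^ 2)
          / (deriv φ x) ^ 2 = a x) := by
  set c : ℝ := (n : ℝ) * ((n : ℝ) ^ 2 - 1) / 12
  have hc : 0 < c := by
    have : (2 : ℝ) ≤ n := by exact_mod_cast hn
    have : 0 < (n : ℝ) * ((n : ℝ) ^ 2 - 1) := by nlinarith
    positivity
  obtain ⟨u, p, hu₀, hsol⟩ :=
    exists_hasDerivAt_hill (q := fun x => a x / (2 * c)) (hI.mem_nhds hx₀) (ha.div_const _)
  have hne : ∀ᶠ x in 𝓝 x₀, u x ≠ 0 :=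
    hsol.self_of_nhds.1.continuousAt.eventually_ne (by simp [hu₀])
  obtain ⟨ε, hε, hball⟩ :=
    eventually_nhds_iff_ball.1 ((hsol.and hne).and (hI.mem_nhds hx₀))
  obtain ⟨φ, hφ, hφ', hS⟩ := exists_schwarzian_eq_of_hill isOpen_ball (convex_ball x₀ ε)
    (mem_ball_self hε) (fun x hx => (hball x hx).1.1.1) (fun x hx => (hball x hx).1.1.2)
    (ha.div_const _ |>.mono fun x hx => (hball x hx).2) (fun x hx => (hball x hx).1.2)
  refine ⟨ball x₀ ε, fun x hx => (hball x hx).2, isOpen_ball, convex_ball x₀ ε,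
    mem_ball_self hε, φ, hφ, hφ', fun x hx => ?_⟩
  rw [mul_div_assoc, hS x hx]
  field_simp

/-- Local solvability of the Schwarzian equation: for `n ≥ 2` and `a` continuous
on the open interval `I` with `x₀ ∈ I`, there are an open subinterval `J ⊆ I`
containing `x₀` and a `C³` function `φ` with `φ' > 0` on `J` such that
`(n(n²-1)/12)·(φ'·φ''' - (3/2)·φ''²)/φ'² = a` on `J`. -/
theorem stmt_9 (n : ℕ) (hn : 2 ≤ n) (I : Set ℝ) (hI : IsOpen I) (hIc : Convex ℝ I)
    (a : ℝ → ℝ) (ha : ContinuousOn a I) (x₀ : ℝ) (hx₀ : x₀ ∈ I) :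
    ∃ J : Set ℝ, J ⊆ I ∧ IsOpen J ∧ Convex ℝ J ∧ x₀ ∈ J ∧
      ∃ φ : ℝ → ℝ, ContDiffOn ℝ 3 φ J ∧
        (∀ x ∈ J, 0 < deriv φ x) ∧
        (∀ x ∈ J, ((n : ℝ) * ((n : ℝ) ^ 2 - 1) / 12) *
          (deriv φ x * iteratedDeriv 3 φ x - (3 / 2) * (iteratedDeriv 2 φ x) ^ 2)
          / (deriv φ x) ^ 2 = a x) :=
  stmt_9_general n hn I hI a ha x₀ hx₀
end

section
/- Let a, b, c, d ∈ ℝ with ad - bc ≠ 0, let f(x) = (ax+b)/(cx+d), and let I ⊆ ℝ be an open interval on which cx + d ≠ 0. Let g : f(I) → ℝ and suppose z : f(I) → ℝ is three times differentiable and satisfies z'''(t) + g(t)·z(t) = 0 for all t ∈ f(I). Then the function y(x) := f'(x)^{-1}·z(f(x)) is three times differentiable on I and satisfies y'''(x) + f'(x)³·g(f(x))·y(x) = 0 for all x ∈ I. -/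
/-!
With `w x = c x + d` and `Δ = a d - b c` we have `f' = Δ / w²`, so on `I` the function
`y = z ∘ f / f'` is `w² / Δ · z ∘ f`. Differentiating three times, every term involving
`z ∘ f` or its first two derivatives cancels (this is the vanishing of the Schwarzian
derivative of a Möbius map), leaving `y''' = f'² · z''' ∘ f`. Hence
`y''' + f'³ · g ∘ f · y = f'² · (z''' + g z) ∘ f = 0`.
-/

open Set Filter

theorem hasDerivAt_deriv_of_isOpen {𝕜 E : Type*} [NontriviallyNormedField 𝕜]
    [NormedAddCommGroup E] [NormedSpace 𝕜 E] {U : Set 𝕜} (hU : IsOpen U)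
    {F F' F'' : 𝕜 → E} (hF : ∀ x ∈ U, HasDerivAt F (F' x) x)
    (hF' : ∀ x ∈ U, HasDerivAt F' (F'' x) x) :
    ∀ x ∈ U, HasDerivAt (deriv F) (F'' x) x := fun x hx =>
  (hF' x hx).congr_of_eventuallyEq <|
    EqOn.eventuallyEq_of_mem (fun u hu => (hF u hu).deriv) (hU.mem_nhds hx)

theorem hasDerivAt_mobius {a b c d x : ℝ} (hx : c * x + d ≠ 0) :
    HasDerivAt (fun u => (a * u + b) / (c * u + d)) ((a * d - b * c) / (c * x + d) ^ 2) x := by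
  have hnum : HasDerivAt (fun u => a * u + b) a x := by
    simpa using ((hasDerivAt_id x).const_mul a).add_const b
  have hden : HasDerivAt (fun u => c * u + d) c x := by
    simpa using ((hasDerivAt_id x).const_mul c).add_const d
  exact (hnum.div hden hx).congr_deriv (by ring)

section Pullback

-- Where `f' = D / (c x + d)²`, the closed forms `₀, ₁, ₂` are `y, y', y''` for
-- `y = (c x + d)² / D · z ∘ f = z ∘ f / f'`.

variable {c d D : ℝ} {f z : ℝ → ℝ} {x : ℝ}

theorem hasDerivAt_pullback_closedForm₀ (hD : D ≠ 0) (hx : c * x + d ≠ 0)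
    (hf : HasDerivAt f (D / (c * x + d) ^ 2) x) (hz : DifferentiableAt ℝ z (f x)) :
    HasDerivAt (fun u => (c * u + d) ^ 2 / D * z (f u))
      (2 * c * (c * x + d) / D * z (f x) + deriv z (f x)) x := by
  have hw : HasDerivAt (fun u => (c * u + d) ^ 2 / D) (2 * (c * x + d) * c / D) x := by
    simpa using ((((hasDerivAt_id x).const_mul c).add_const d).pow 2).div_const D
  refine (hw.mul (hz.hasDerivAt.comp x hf)).congr_deriv ?_
  simp only [Function.comp_apply]
  field_simp

theorem hasDerivAt_pullback_closedForm₁ (hD : D ≠ 0) (hx : c * x + d ≠ 0)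
    (hf : HasDerivAt f (D / (c * x + d) ^ 2) x) (hz : DifferentiableAt ℝ z (f x))
    (hz' : DifferentiableAt ℝ (deriv z) (f x)) :
    HasDerivAt (fun u => 2 * c * (c * u + d) / D * z (f u) + deriv z (f u))
      (2 * c ^ 2 / D * z (f x) + 2 * c / (c * x + d) * deriv z (f x)
        + D / (c * x + d) ^ 2 * deriv (deriv z) (f x)) x := by
  have hw : HasDerivAt (fun u => 2 * c * (c * u + d) / D) (2 * c * c / D) x := by
    simpa using (((hasDerivAt_id x).const_mul c).add_const d).const_mul (2 * c) |>.div_const D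
  refine ((hw.mul (hz.hasDerivAt.comp x hf)).add (hz'.hasDerivAt.comp x hf)).congr_deriv ?_
  simp only [Function.comp_apply]
  field_simp

theorem hasDerivAt_pullback_closedForm₂ (hD : D ≠ 0) (hx : c * x + d ≠ 0)
    (hf : HasDerivAt f (D / (c * x + d) ^ 2) x) (hz : DifferentiableAt ℝ z (f x))
    (hz' : DifferentiableAt ℝ (deriv z) (f x))
    (hz'' : DifferentiableAt ℝ (deriv (deriv z)) (f x)) :
    HasDerivAt (fun u => 2 * c ^ 2 / D * z (f u) + 2 * c / (c * u + d) * deriv z (f u)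
        + D / (c * u + d) ^ 2 * deriv (deriv z) (f u))
      ((D / (c * x + d) ^ 2) ^ 2 * deriv (deriv (deriv z)) (f x)) x := by
  have hw : HasDerivAt (fun u => c * u + d) c x := by
    simpa using ((hasDerivAt_id x).const_mul c).add_const d
  have h₀ := (hz.hasDerivAt.comp x hf).const_mul (2 * c ^ 2 / D)
  have h₁ := ((hasDerivAt_const x (2 * c)).div hw hx).mul (hz'.hasDerivAt.comp x hf)
  have h₂ := ((hasDerivAt_const x D).div (hw.pow 2) (pow_ne_zero 2 hx)).mul
    (hz''.hasDerivAt.comp x hf)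
  refine ((h₀.add h₁).add h₂).congr_deriv ?_
  simp only [Pi.div_apply, Pi.pow_apply, Function.comp_apply]
  field_simp
  ring

theorem differentiableAt_iteratedDeriv_and_iteratedDeriv_three_eq {U : Set ℝ} (hU : IsOpen U)
    (hD : D ≠ 0) (hw : ∀ x ∈ U, c * x + d ≠ 0)
    (hf : ∀ x ∈ U, HasDerivAt f (D / (c * x + d) ^ 2) x)
    (hz : ∀ x ∈ U, ∀ k < 3, DifferentiableAt ℝ (iteratedDeriv k z) (f x))
    {y : ℝ → ℝ} (hy : EqOn y (fun x => (c * x + d) ^ 2 / D * z (f x)) U) (hx : x ∈ U) :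
    (∀ k < 3, DifferentiableAt ℝ (iteratedDeriv k y) x) ∧
      iteratedDeriv 3 y x = deriv f x ^ 2 * iteratedDeriv 3 z (f x) := by
  have hz₀ : ∀ x ∈ U, DifferentiableAt ℝ z (f x) := fun x hx => by
    simpa using hz x hx 0 (by norm_num)
  have hz₁ : ∀ x ∈ U, DifferentiableAt ℝ (deriv z) (f x) := fun x hx => by
    simpa using hz x hx 1 (by norm_num)
  have hz₂ : ∀ x ∈ U, DifferentiableAt ℝ (deriv (deriv z)) (f x) := fun x hx => by
    simpa [iteratedDeriv_succ] using hz x hx 2 (by norm_num)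
  have hy₀ : ∀ x ∈ U, HasDerivAt y (2 * c * (c * x + d) / D * z (f x) + deriv z (f x)) x :=
    fun x hx => (hasDerivAt_pullback_closedForm₀ hD (hw x hx) (hf x hx) (hz₀ x hx))
      |>.congr_of_eventuallyEq (hy.eventuallyEq_of_mem (hU.mem_nhds hx))
  have hy₁ := hasDerivAt_deriv_of_isOpen hU hy₀ fun x hx =>
    hasDerivAt_pullback_closedForm₁ hD (hw x hx) (hf x hx) (hz₀ x hx) (hz₁ x hx)
  have hy₂ := hasDerivAt_deriv_of_isOpen hU hy₁ fun x hx =>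
    hasDerivAt_pullback_closedForm₂ hD (hw x hx) (hf x hx) (hz₀ x hx) (hz₁ x hx) (hz₂ x hx)
  refine ⟨fun k hk => ?_, ?_⟩
  · interval_cases k
    · simpa using (hy₀ x hx).differentiableAt
    · simpa using (hy₁ x hx).differentiableAt
    · simpa [iteratedDeriv_succ] using (hy₂ x hx).differentiableAt
  · simpa [iteratedDeriv_succ, (hf x hx).deriv] using (hy₂ x hx).deriv

end Pullback

theorem stmt_13_general (a b c d : ℝ) (h : a * d - b * c ≠ 0)
    (f : ℝ → ℝ) (hf : ∀ x, f x = (a * x + b) / (c * x + d))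
    (I : Set ℝ) (hI : IsOpen I)
    (hdom : ∀ x ∈ I, c * x + d ≠ 0)
    (g z : ℝ → ℝ)
    (hz : ∀ t ∈ f '' I, ∀ k < 3, DifferentiableAt ℝ (iteratedDeriv k z) t)
    (heq : ∀ t ∈ f '' I, iteratedDeriv 3 z t + g t * z t = 0)
    (y : ℝ → ℝ) (hy : ∀ x, y x = (deriv f x)⁻¹ * z (f x)) :
    (∀ x ∈ I, ∀ k < 3, DifferentiableAt ℝ (iteratedDeriv k y) x) ∧
    (∀ x ∈ I, iteratedDeriv 3 y x + (deriv f x) ^ 3 * g (f x) * y x = 0) := by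
  have hf' : ∀ x ∈ I, HasDerivAt f ((a * d - b * c) / (c * x + d) ^ 2) x := fun x hx => by
    rw [show f = _ from funext hf]
    exact hasDerivAt_mobius (hdom x hx)
  have hy' : EqOn y (fun x => (c * x + d) ^ 2 / (a * d - b * c) * z (f x)) I := fun x hx => by
    rw [hy, (hf' x hx).deriv, inv_div]
  have key x (hx : x ∈ I) := differentiableAt_iteratedDeriv_and_iteratedDeriv_three_eq hI h hdom
    hf' (fun x hx => hz _ (mem_image_of_mem f hx)) hy' hx
  refine ⟨fun x hx => (key x hx).1, fun x hx => ?_⟩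
  have hf'_ne : deriv f x ≠ 0 := by
    rw [(hf' x hx).deriv]
    exact div_ne_zero h (pow_ne_zero 2 (hdom x hx))
  rw [(key x hx).2, hy x]
  field_simp
  linear_combination deriv f x ^ 2 * heq (f x) (mem_image_of_mem f hx)

/-- Projective invariance of the Laguerre–Forsyth form for `n = 3`: if
`z''' + g z = 0` on `f(I)` for a Möbius transformation `f x = (a*x+b)/(c*x+d)`
whose denominator does not vanish on the open interval `I`, then
`y x = f'(x)⁻¹ · z(f x)` is three times differentiable on `I` and satisfies
`y''' + f'³·g(f)·y = 0` on `I`. -/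
theorem stmt_13 (a b c d : ℝ) (h : a * d - b * c ≠ 0)
    (f : ℝ → ℝ) (hf : ∀ x, f x = (a * x + b) / (c * x + d))
    (I : Set ℝ) (hI : IsOpen I) (hIc : Convex ℝ I)
    (hdom : ∀ x ∈ I, c * x + d ≠ 0)
    (g z : ℝ → ℝ)
    (hz : ∀ t ∈ f '' I, ∀ k < 3, DifferentiableAt ℝ (iteratedDeriv k z) t)
    (heq : ∀ t ∈ f '' I, iteratedDeriv 3 z t + g t * z t = 0)
    (y : ℝ → ℝ) (hy : ∀ x, y x = (deriv f x)⁻¹ * z (f x)) :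
    (∀ x ∈ I, ∀ k < 3, DifferentiableAt ℝ (iteratedDeriv k y) x) ∧
    (∀ x ∈ I, iteratedDeriv 3 y x + (deriv f x) ^ 3 * g (f x) * y x = 0) :=
  stmt_13_general a b c d h f hf I hI hdom g z hz heq y hy
end
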